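/- arXiv:1003.1588 — 4 statements merged into one kernel-verified Lean document; each statement's English description precedes it below -/
import Mathlib

section
/- Let I be a witnessed fuzzy interpretation that is a model of the knowledge base K2 under Łukasiewicz semantics. Then for every natural number n ≥ 1 there exist elements b_1, b_2, …, b_n ∈ Δ^I such that 1/2 = A^I(b_1) < A^I(b_2) < … < A^I(b_n) < 1. -/
/-!
Axiom (2) and witnessedness give every `x` an `R`-successor `y` with `R x y = 1`. For such a `y`,
`A y` lies between `(∀R.A)(x)` and `(∃R.A)(x)`, which axiom (3) makes equal, while axiom (4) says
`A x = 2 (∀R.A)(x) - 1` as soon as `A x > 0`. Hence `A y = (1 + A x) / 2`, and iterating the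
successor from `a` produces the values `1 - (1 / 2) ^ (k + 1)`.
-/

/-- ALC concepts over a single atomic concept `A` and a single role `R`. -/
inductive ALCConcept : Type where
  | atom : ALCConcept
  | top  : ALCConcept
  | bot  : ALCConcept
  | conj : ALCConcept → ALCConcept → ALCConcept
  | disj : ALCConcept → ALCConcept → ALCConcept
  | neg  : ALCConcept → ALCConcept
  | all  : ALCConcept → ALCConcept
  | ex   : ALCConcept → ALCConcept

/-- Łukasiewicz t-norm. -/
def lukT (x y : ℝ) : ℝ := max (x + y - 1) 0
/-- Łukasiewicz t-conorm. -/
def lukS (x y : ℝ) : ℝ := min (x + y) 1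
/-- Łukasiewicz implication. -/
def lukImp (x y : ℝ) : ℝ := min (1 - x + y) 1

/-- Value of a concept at a point under Łukasiewicz semantics. -/
noncomputable def lukVal {Δ : Type} (A : Δ → ℝ) (R : Δ → Δ → ℝ) : ALCConcept → Δ → ℝ
  | ALCConcept.atom, x => A x
  | ALCConcept.top, _ => 1
  | ALCConcept.bot, _ => 0
  | ALCConcept.conj C D, x => lukT (lukVal A R C x) (lukVal A R D x)
  | ALCConcept.disj C D, x => lukS (lukVal A R C x) (lukVal A R D x)
  | ALCConcept.neg C, x => 1 - lukVal A R C x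
  | ALCConcept.all C, x => ⨅ y, lukImp (R x y) (lukVal A R C y)
  | ALCConcept.ex C, x => ⨆ y, lukT (R x y) (lukVal A R C y)

/-- Degree of subsumption `(C ⊑ D)^I` under Łukasiewicz semantics. -/
noncomputable def lukSub {Δ : Type} (A : Δ → ℝ) (R : Δ → Δ → ℝ) (C D : ALCConcept) : ℝ :=
  ⨅ x, lukImp (lukVal A R C x) (lukVal A R D x)

/-- A fuzzy interpretation: nonempty domain, values in `[0,1]`. -/
def IsInterp {Δ : Type} (A : Δ → ℝ) (R : Δ → Δ → ℝ) : Prop :=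
  Nonempty Δ ∧ (∀ x, A x ∈ Set.Icc (0:ℝ) 1) ∧ (∀ x y, R x y ∈ Set.Icc (0:ℝ) 1)

/-- Witnessed interpretation under Łukasiewicz semantics. -/
def Witnessed {Δ : Type} (A : Δ → ℝ) (R : Δ → Δ → ℝ) : Prop :=
  ∀ (C D : ALCConcept) (x : Δ),
    (∃ y, lukVal A R (ALCConcept.ex C) x = lukT (R x y) (lukVal A R C y)) ∧
    (∃ y, lukVal A R (ALCConcept.all C) x = lukImp (R x y) (lukVal A R C y)) ∧
    (∃ y, lukSub A R C D = lukImp (lukVal A R C y) (lukVal A R D y))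

/-- `I` (with designated element `a`) is a model of the knowledge base `K2`. -/
def ModelK2 {Δ : Type} (A : Δ → ℝ) (R : Δ → Δ → ℝ) (a : Δ) : Prop :=
  A a = 1/2 ∧
  lukSub A R ALCConcept.top (ALCConcept.ex ALCConcept.top) = 1 ∧
  (lukSub A R (ALCConcept.all ALCConcept.atom) (ALCConcept.ex ALCConcept.atom) = 1 ∧
   lukSub A R (ALCConcept.ex ALCConcept.atom) (ALCConcept.all ALCConcept.atom) = 1) ∧
  (lukSub A R ALCConcept.atom (ALCConcept.conj (ALCConcept.all ALCConcept.atom) (ALCConcept.all ALCConcept.atom)) = 1 ∧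
   lukSub A R (ALCConcept.conj (ALCConcept.all ALCConcept.atom) (ALCConcept.all ALCConcept.atom)) ALCConcept.atom = 1)

lemma lukT_mem_Icc {x y : ℝ} (hx : x ∈ Set.Icc (0:ℝ) 1) (hy : y ∈ Set.Icc (0:ℝ) 1) :
    lukT x y ∈ Set.Icc (0:ℝ) 1 :=
  ⟨le_max_right _ _, max_le (by linarith [hx.2, hy.2]) zero_le_one⟩

lemma lukS_mem_Icc {x y : ℝ} (hx : x ∈ Set.Icc (0:ℝ) 1) (hy : y ∈ Set.Icc (0:ℝ) 1) :
    lukS x y ∈ Set.Icc (0:ℝ) 1 :=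
  ⟨le_min (by linarith [hx.1, hy.1]) zero_le_one, min_le_right _ _⟩

lemma lukImp_mem_Icc {x y : ℝ} (hx : x ∈ Set.Icc (0:ℝ) 1) (hy : y ∈ Set.Icc (0:ℝ) 1) :
    lukImp x y ∈ Set.Icc (0:ℝ) 1 :=
  ⟨le_min (by linarith [hx.2, hy.1]) zero_le_one, min_le_right _ _⟩

lemma lukT_one_left {y : ℝ} (hy : 0 ≤ y) : lukT 1 y = y := by
  simp only [lukT, add_sub_cancel_left, max_eq_left hy]

lemma lukT_one_right {x : ℝ} (hx : 0 ≤ x) : lukT x 1 = x := by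
  simp only [lukT, add_sub_cancel_right, max_eq_left hx]

lemma lukImp_one_left {y : ℝ} (hy : y ≤ 1) : lukImp 1 y = y := by
  simp only [lukImp, sub_self, zero_add, min_eq_left hy]

lemma lukT_self_of_pos {x : ℝ} (h : 0 < lukT x x) : lukT x x = 2 * x - 1 := by
  unfold lukT at h ⊢
  rcases max_cases (x + x - 1) 0 with ⟨hmax, -⟩ | ⟨hmax, -⟩ <;> rw [hmax] at h ⊢
  · ring
  · exact absurd h (lt_irrefl 0)

lemma ciInf_mem_Icc {ι : Sort*} [Nonempty ι] {f : ι → ℝ} (hf : ∀ y, f y ∈ Set.Icc (0:ℝ) 1) :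
    (⨅ y, f y) ∈ Set.Icc (0:ℝ) 1 :=
  ⟨le_ciInf fun y => (hf y).1, (ciInf_le ⟨0, by rintro _ ⟨y, rfl⟩; exact (hf y).1⟩
    (Classical.arbitrary ι)).trans (hf _).2⟩

lemma ciSup_mem_Icc {ι : Sort*} [Nonempty ι] {f : ι → ℝ} (hf : ∀ y, f y ∈ Set.Icc (0:ℝ) 1) :
    (⨆ y, f y) ∈ Set.Icc (0:ℝ) 1 :=
  ⟨(hf _).1.trans (le_ciSup ⟨1, by rintro _ ⟨y, rfl⟩; exact (hf y).2⟩
    (Classical.arbitrary ι)), ciSup_le fun y => (hf y).2⟩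

section Interpretation

variable {Δ : Type} {A : Δ → ℝ} {R : Δ → Δ → ℝ}

lemma lukVal_mem_Icc (hI : IsInterp A R) (C : ALCConcept) (x : Δ) :
    lukVal A R C x ∈ Set.Icc (0:ℝ) 1 := by
  have := hI.1
  induction C generalizing x with
  | atom => exact hI.2.1 x
  | top => exact ⟨zero_le_one, le_rfl⟩
  | bot => exact ⟨le_rfl, zero_le_one⟩
  | conj C D ihC ihD => exact lukT_mem_Icc (ihC x) (ihD x)
  | disj C D ihC ihD => exact lukS_mem_Icc (ihC x) (ihD x)
  | neg C ihC =>
    show 1 - lukVal A R C x ∈ Set.Icc (0:ℝ) 1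
    exact ⟨by linarith [(ihC x).2], by linarith [(ihC x).1]⟩
  | all C ihC => exact ciInf_mem_Icc fun y => lukImp_mem_Icc (hI.2.2 x y) (ihC y)
  | ex C ihC => exact ciSup_mem_Icc fun y => lukT_mem_Icc (hI.2.2 x y) (ihC y)

lemma lukVal_le_of_lukSub_eq_one (hI : IsInterp A R) {C D : ALCConcept}
    (h : lukSub A R C D = 1) (x : Δ) : lukVal A R C x ≤ lukVal A R D x := by
  have hle : (1:ℝ) ≤ lukImp (lukVal A R C x) (lukVal A R D x) :=
    h ▸ ciInf_le ⟨0, by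
      rintro _ ⟨z, rfl⟩
      exact (lukImp_mem_Icc (lukVal_mem_Icc hI C z) (lukVal_mem_Icc hI D z)).1⟩ x
  linarith [(le_min_iff.mp hle).1]

lemma lukVal_le_lukVal_ex (hI : IsInterp A R) (C : ALCConcept) {x y : Δ} (hxy : R x y = 1) :
    lukVal A R C y ≤ lukVal A R (.ex C) x := by
  have hle := le_ciSup (f := fun z => lukT (R x z) (lukVal A R C z))
    ⟨1, by rintro _ ⟨z, rfl⟩; exact (lukT_mem_Icc (hI.2.2 x z) (lukVal_mem_Icc hI C z)).2⟩ y
  rwa [hxy, lukT_one_left (lukVal_mem_Icc hI C y).1] at hle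

lemma lukVal_all_le_lukVal (hI : IsInterp A R) (C : ALCConcept) {x y : Δ} (hxy : R x y = 1) :
    lukVal A R (.all C) x ≤ lukVal A R C y := by
  have hle := ciInf_le (f := fun z => lukImp (R x z) (lukVal A R C z))
    ⟨0, by rintro _ ⟨z, rfl⟩; exact (lukImp_mem_Icc (hI.2.2 x z) (lukVal_mem_Icc hI C z)).1⟩ y
  rwa [hxy, lukImp_one_left (lukVal_mem_Icc hI C y).2] at hle

lemma exists_rel_eq_one (hI : IsInterp A R) (hw : Witnessed A R)
    (hser : lukSub A R .top (.ex .top) = 1) (x : Δ) : ∃ y, R x y = 1 := by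
  obtain ⟨y, hy⟩ := (hw .top .top x).1
  have hex : lukVal A R (.ex .top) x = 1 :=
    le_antisymm (lukVal_mem_Icc hI _ x).2 (lukVal_le_of_lukSub_eq_one hI hser x)
  refine ⟨y, ?_⟩
  rw [hex] at hy
  exact (hy.trans (lukT_one_right (hI.2.2 x y).1)).symm

lemma atom_eq_of_rel_eq_one (hI : IsInterp A R)
    (hexall : lukSub A R (.ex .atom) (.all .atom) = 1)
    (hall₁ : lukSub A R .atom (.conj (.all .atom) (.all .atom)) = 1)
    (hall₂ : lukSub A R (.conj (.all .atom) (.all .atom)) .atom = 1)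
    {x y : Δ} (hx : 0 < A x) (hxy : R x y = 1) :
    A y = (1 + A x) / 2 := by
  set f := lukVal A R (.all .atom) x
  have hAx : A x = lukT f f :=
    le_antisymm (lukVal_le_of_lukSub_eq_one hI hall₁ x) (lukVal_le_of_lukSub_eq_one hI hall₂ x)
  have hf : A x = 2 * f - 1 := hAx.trans (lukT_self_of_pos (hAx ▸ hx))
  have hAy : A y = f :=
    le_antisymm ((lukVal_le_lukVal_ex hI .atom hxy).trans (lukVal_le_of_lukSub_eq_one hI hexall x))
      (lukVal_all_le_lukVal hI .atom hxy)
  linarith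

end Interpretation

lemma iterate_eq_one_sub_half_pow {Δ : Type} {A : Δ → ℝ} (s : Δ → Δ)
    (hs : ∀ x, 0 < A x → A (s x) = (1 + A x) / 2) {a : Δ} (ha : A a = 1 / 2) (k : ℕ) :
    A (s^[k] a) = 1 - (1 / 2 : ℝ) ^ (k + 1) := by
  induction k with
  | zero => rw [Function.iterate_zero_apply, ha]; norm_num
  | succ k ih =>
    have hpos : 0 < A (s^[k] a) := by
      have hlt : (1 / 2 : ℝ) ^ (k + 1) < 1 := pow_lt_one₀ (by norm_num) (by norm_num) k.succ_ne_zero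
      rw [ih]
      linarith
    rw [Function.iterate_succ_apply', hs _ hpos, ih]
    ring

lemma strictMono_one_sub_half_pow : StrictMono fun k : ℕ => 1 - (1 / 2 : ℝ) ^ (k + 1) :=
  fun _ _ hij => sub_lt_sub_left
    (pow_lt_pow_right_of_lt_one₀ (by norm_num) (by norm_num) (Nat.succ_lt_succ hij)) 1

theorem stmt0 {Δ : Type} (A : Δ → ℝ) (R : Δ → Δ → ℝ) (a : Δ)
    (hI : IsInterp A R) (hw : Witnessed A R) (hm : ModelK2 A R a)
    (n : ℕ) (hn : 1 ≤ n) :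
    ∃ b : Fin n → Δ,
      A (b ⟨0, hn⟩) = 1/2 ∧
      StrictMono (fun i : Fin n => A (b i)) ∧
      A (b ⟨n - 1, by omega⟩) < 1 := by
  obtain ⟨ha, hser, ⟨-, hexall⟩, hall₁, hall₂⟩ := hm
  choose s hs using exists_rel_eq_one hI hw hser
  have hA := iterate_eq_one_sub_half_pow s
    (fun x hx => atom_eq_of_rel_eq_one hI hexall hall₁ hall₂ hx (hs x)) ha
  refine ⟨fun i => s^[i] a, ha, ?_, ?_⟩
  · intro i j hij
    simp only [hA]
    exact strictMono_one_sub_half_pow hij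
  · rw [hA]
    linarith [pow_pos (by norm_num : (0:ℝ) < 1 / 2) (n - 1 + 1)]
end

section
/- There is no fuzzy interpretation with finite domain Δ^I that is a model of the knowledge base K2 under Łukasiewicz semantics. -/
lemma luk_sub_le {Δ : Type} [Finite Δ] (A : Δ → ℝ) (R : Δ → Δ → ℝ) {C D : ALCConcept}
    (h : lukSub A R C D = 1) (x : Δ) : lukVal A R C x ≤ lukVal A R D x := by
  have hb : BddBelow (Set.range fun x => lukImp (lukVal A R C x) (lukVal A R D x)) :=
    (Set.finite_range _).bddBelow
  have h1 : (1:ℝ) ≤ lukImp (lukVal A R C x) (lukVal A R D x) := by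
    have := ciInf_le hb x
    rw [← lukSub, h] at this
    exact this
  rw [lukImp] at h1
  have := (le_min_iff.mp h1).1
  linarith

lemma luk_seq_false {Δ : Type} [Finite Δ] (A : Δ → ℝ) (P : Δ → Prop) (a : Δ) (ha : P a)
    (hstep : ∀ x, P x → ∃ y, P y ∧ A y = (1 + A x) / 2)
    (hlt : ∀ x, P x → A x < 1) : False := by
  have key : ∀ x : {z : Δ // P z}, ∃ y : {z : Δ // P z}, A y.1 = (1 + A x.1) / 2 := by
    rintro ⟨x, hx⟩
    obtain ⟨y, hy, hAy⟩ := hstep x hx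
    exact ⟨⟨y, hy⟩, hAy⟩
  let seq : ℕ → {z : Δ // P z} := fun n =>
    Nat.rec ⟨a, ha⟩ (fun _ p => (key p).choose) n
  have hseq : ∀ n, A (seq (n + 1)).1 = (1 + A (seq n).1) / 2 := fun n =>
    (key (seq n)).choose_spec
  have hmono : StrictMono (fun n => A (seq n).1) := by
    apply strictMono_nat_of_lt_succ
    intro n
    have h1 : A (seq n).1 < 1 := hlt _ (seq n).2
    rw [hseq n]
    linarith
  have hinf : (Set.range fun n => A (seq n).1).Infinite :=
    Set.infinite_range_of_injective hmono.injective
  have hsub : (Set.range fun n => A (seq n).1) ⊆ Set.range A := by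
    rintro _ ⟨n, rfl⟩; exact ⟨(seq n).1, rfl⟩
  exact hinf ((Set.finite_range A).subset hsub)

theorem stmt1 {Δ : Type} [Finite Δ] (A : Δ → ℝ) (R : Δ → Δ → ℝ) (a : Δ)
    (hI : IsInterp A R) (hm : ModelK2 A R a) : False := by
  obtain ⟨hne, hA01, hR01⟩ := hI
  obtain ⟨ha, h2, ⟨h3a, h3b⟩, ⟨h4a, h4b⟩⟩ := hm
  -- every point has a successor with role degree 1
  have hsucc : ∀ x : Δ, ∃ y, R x y = 1 := by
    intro x
    have h1 : (1:ℝ) ≤ lukVal A R (ALCConcept.ex ALCConcept.top) x := by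
      have := luk_sub_le A R h2 x
      simpa [lukVal] using this
    rw [show lukVal A R (ALCConcept.ex ALCConcept.top) x
        = ⨆ y, lukT (R x y) 1 from rfl] at h1
    obtain ⟨y, hy⟩ := exists_eq_ciSup_of_finite (f := fun y => lukT (R x y) 1)
    rw [← hy, lukT] at h1
    have hle : R x y ≤ 1 := (hR01 x y).2
    rcases le_max_iff.mp h1 with h | h
    · exact ⟨y, by linarith⟩
    · linarith
  -- abbreviations
  set f : Δ → ℝ := fun x => lukVal A R (ALCConcept.all ALCConcept.atom) x with hf
  -- f = e pointwise and A x = lukT (f x) (f x)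
  have hfe : ∀ x, f x = lukVal A R (ALCConcept.ex ALCConcept.atom) x := fun x =>
    le_antisymm (luk_sub_le A R h3a x) (luk_sub_le A R h3b x)
  have hA4 : ∀ x, A x = lukT (f x) (f x) := fun x =>
    le_antisymm (luk_sub_le A R h4a x) (luk_sub_le A R h4b x)
  -- the key step
  have hstep : ∀ x, (1/2 ≤ A x ∧ A x < 1) → ∃ y, (1/2 ≤ A y ∧ A y < 1) ∧ A y = (1 + A x) / 2 := by
    rintro x ⟨hx1, hx2⟩
    obtain ⟨y, hy⟩ := hsucc x
    -- f x ≤ A y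
    have hfy : f x ≤ A y := by
      have hb : BddBelow (Set.range fun z => lukImp (R x z) (A z)) := (Set.finite_range _).bddBelow
      have : f x ≤ lukImp (R x y) (A y) := by
        rw [hf]
        exact ciInf_le hb y
      rw [lukImp, hy] at this
      calc f x ≤ min (1 - 1 + A y) 1 := this
        _ ≤ 1 - 1 + A y := min_le_left _ _
        _ = A y := by ring
    -- A y ≤ e x = f x
    have hye : A y ≤ f x := by
      have hb : BddAbove (Set.range fun z => lukT (R x z) (A z)) := (Set.finite_range _).bddAbove
      have h1 : lukT (R x y) (A y) ≤ lukVal A R (ALCConcept.ex ALCConcept.atom) x :=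
        le_ciSup hb y
      rw [lukT, hy, ← hfe x] at h1
      calc A y = max (1 + A y - 1) 0 := by
            rw [max_eq_left (by linarith [(hA01 y).1])]; ring
        _ ≤ f x := h1
    have hfx : f x = A y := le_antisymm hfy hye
    -- A x = max (2 f x - 1) 0
    have h4 : A x = max (f x + f x - 1) 0 := hA4 x
    have hfxval : f x = (1 + A x) / 2 := by
      rcases le_max_iff.mp h4.le with h | h
      · -- A x ≥ max too; need equality. Case on which side max takes.
        rcases max_cases (f x + f x - 1) 0 with ⟨he, _⟩ | ⟨he, hle⟩
        · rw [he] at h4; linarith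
        · rw [he] at h4; linarith
      · linarith
    refine ⟨y, ⟨?_, ?_⟩, by rw [← hfx, hfxval]⟩
    · rw [← hfx, hfxval]; linarith
    · rw [← hfx, hfxval]; linarith
  exact luk_seq_false A (fun x => 1/2 ≤ A x ∧ A x < 1) a
    ⟨by rw [ha], by rw [ha]; norm_num⟩ hstep (fun x hx => hx.2)
end

section
/- Consider, under Łukasiewicz semantics, the interpretation I defined by: Δ^I = {1, 2, 3, …} ∪ {∞}; R^I(i, i+1) = 1 for every i ∈ {1,2,3,…}, R^I(∞, ∞) = 1, and R^I(u, v) = 0 for all other pairs; A^I(∞) = 1 and A^I(i) = (2^i − 1)/2^i for every i ∈ {1,2,3,…}. Then for every concept C and every real ε > 0, exactly one of the following two conditions holds: Cond1(C, ε): C^I(∞) = 0 and there is some n ∈ ℕ such that inf{C^I(i) : i ∈ ℕ, i ≥ n} = 0 and sup{C^I(i) : i ∈ ℕ, i ≥ n} ≤ ε; or Cond2(C, ε): C^I(∞) = 1 and there is some n ∈ ℕ such that sup{C^I(i) : i ∈ ℕ, i ≥ n} = 1 and inf{C^I(i) : i ∈ ℕ, i ≥ n} ≥ 1 − ε. -/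
/-- The atomic-concept membership function of the model: `A^I(∞) = 1`,
`A^I(i) = (2^(i+1) - 1)/2^(i+1)` (indices shifted: `some i` is the element `i+1` of the paper). -/
noncomputable def A3 : Option ℕ → ℝ
  | Option.none => 1
  | Option.some i => ((2:ℝ)^(i+1) - 1) / (2:ℝ)^(i+1)

/-- The role membership function of the model: `R^I(i, i+1) = 1`, `R^I(∞,∞) = 1`, else `0`. -/
noncomputable def R3 : Option ℕ → Option ℕ → ℝ
  | Option.some i, Option.some j => if j = i + 1 then 1 else 0
  | Option.none, Option.none => 1
  | _, _ => 0

/-- `Cond1(C, ε)`. -/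
def Cond1 (C : ALCConcept) (eps : ℝ) : Prop :=
  lukVal A3 R3 C Option.none = 0 ∧
  ∃ n : ℕ, sInf ((fun i : ℕ => lukVal A3 R3 C (Option.some i)) '' Set.Ici n) = 0 ∧
    sSup ((fun i : ℕ => lukVal A3 R3 C (Option.some i)) '' Set.Ici n) ≤ eps

/-- `Cond2(C, ε)`. -/
def Cond2 (C : ALCConcept) (eps : ℝ) : Prop :=
  lukVal A3 R3 C Option.none = 1 ∧
  ∃ n : ℕ, sSup ((fun i : ℕ => lukVal A3 R3 C (Option.some i)) '' Set.Ici n) = 1 ∧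
    sInf ((fun i : ℕ => lukVal A3 R3 C (Option.some i)) '' Set.Ici n) ≥ 1 - eps
open Filter Topology

lemma lukImp_le_one' (x y : ℝ) : lukImp x y ≤ 1 := min_le_right _ _

lemma lukImp_nonneg' {x y : ℝ} (hx : x ≤ 1) (hy : 0 ≤ y) : 0 ≤ lukImp x y :=
  le_min (by linarith) one_pos.le

lemma lukT_nonneg' (x y : ℝ) : 0 ≤ lukT x y := le_max_right _ _

lemma lukT_le_one' {x y : ℝ} (hx : x ≤ 1) (hy : y ≤ 1) : lukT x y ≤ 1 :=
  max_le (by linarith) one_pos.le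

lemma lukImp_one' {t : ℝ} (ht : t ≤ 1) : lukImp 1 t = t := by
  unfold lukImp; rw [show (1:ℝ) - 1 + t = t by ring, min_eq_left ht]

lemma lukImp_zero' {t : ℝ} (ht : 0 ≤ t) : lukImp 0 t = 1 := by
  unfold lukImp; rw [min_eq_right (by linarith)]

lemma lukT_one' {t : ℝ} (ht : 0 ≤ t) : lukT 1 t = t := by
  unfold lukT; rw [show (1:ℝ) + t - 1 = t by ring, max_eq_left ht]

lemma lukT_zero' {t : ℝ} (ht : t ≤ 1) : lukT 0 t = 0 := by
  unfold lukT; rw [show (0:ℝ) + t - 1 = t - 1 by ring, max_eq_right (by linarith)]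

lemma lukVal_mem {Δ : Type} [Nonempty Δ] (A : Δ → ℝ) (R : Δ → Δ → ℝ)
    (hA : ∀ x, A x ∈ Set.Icc (0:ℝ) 1) (hR : ∀ x y, R x y ∈ Set.Icc (0:ℝ) 1) :
    ∀ (C : ALCConcept) (x : Δ), lukVal A R C x ∈ Set.Icc (0:ℝ) 1 := by
  intro C
  induction C with
  | atom => exact hA
  | top => intro x; simp [lukVal]
  | bot => intro x; simp [lukVal]
  | conj C D ihC ihD =>
    intro x
    exact ⟨lukT_nonneg' _ _, lukT_le_one' (ihC x).2 (ihD x).2⟩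
  | disj C D ihC ihD =>
    intro x
    have h1 := ihC x; have h2 := ihD x
    simp only [lukVal, lukS, Set.mem_Icc] at *
    exact ⟨le_min (by linarith [h1.1, h2.1]) (by norm_num), min_le_right _ _⟩
  | neg C ihC =>
    intro x
    have h := ihC x
    simp only [lukVal]
    constructor <;> [linarith [h.2]; linarith [h.1]]
  | all C ihC =>
    intro x
    constructor
    · exact le_ciInf fun y => lukImp_nonneg' (hR x y).2 (ihC y).1
    · refine le_trans (ciInf_le ⟨0, ?_⟩ (Classical.arbitrary Δ)) (lukImp_le_one' _ _)
      rintro _ ⟨y, rfl⟩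
      exact lukImp_nonneg' (hR x y).2 (ihC y).1
  | ex C ihC =>
    intro x
    constructor
    · have hb : BddAbove (Set.range fun y => lukT (R x y) (lukVal A R C y)) :=
        ⟨1, by rintro _ ⟨y, rfl⟩; exact lukT_le_one' (hR x y).2 (ihC y).2⟩
      show (0:ℝ) ≤ ⨆ y, lukT (R x y) (lukVal A R C y)
      exact le_trans (lukT_nonneg' _ _) (le_ciSup hb (Classical.arbitrary Δ))
    · exact ciSup_le fun y => lukT_le_one' (hR x y).2 (ihC y).2

lemma A3_mem : ∀ x, A3 x ∈ Set.Icc (0:ℝ) 1 := by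
  intro x
  cases x with
  | none => simp [A3]
  | some i =>
    have h : (0:ℝ) < 2 ^ (i+1) := by positivity
    have h1 : (1:ℝ) ≤ 2 ^ (i+1) := one_le_pow₀ (by norm_num)
    simp only [A3, Set.mem_Icc]
    constructor
    · exact div_nonneg (by linarith) h.le
    · rw [div_le_one h]; linarith

lemma R3_mem : ∀ x y, R3 x y ∈ Set.Icc (0:ℝ) 1 := by
  intro x y
  cases x <;> cases y <;> simp [R3] <;> split <;> norm_num

lemma vA3_mem (C : ALCConcept) (x : Option ℕ) : lukVal A3 R3 C x ∈ Set.Icc (0:ℝ) 1 :=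
  lukVal_mem A3 R3 A3_mem R3_mem C x

lemma iInf_eq_of_min {f : Option ℕ → ℝ} (y0 : Option ℕ) (h : ∀ y, f y0 ≤ f y) :
    ⨅ y, f y = f y0 :=
  le_antisymm (ciInf_le ⟨f y0, by rintro _ ⟨y, rfl⟩; exact h y⟩ y0) (le_ciInf h)

lemma iSup_eq_of_max {f : Option ℕ → ℝ} (y0 : Option ℕ) (h : ∀ y, f y ≤ f y0) :
    ⨆ y, f y = f y0 :=
  le_antisymm (ciSup_le h) (le_ciSup ⟨f y0, by rintro _ ⟨y, rfl⟩; exact h y⟩ y0)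

lemma val_all_none (C : ALCConcept) :
    lukVal A3 R3 (ALCConcept.all C) Option.none = lukVal A3 R3 C Option.none := by
  show (⨅ y, lukImp (R3 Option.none y) (lukVal A3 R3 C y)) = _
  rw [iInf_eq_of_min Option.none]
  · simp [R3, lukImp_one' (vA3_mem C Option.none).2]
  · intro y
    cases y with
    | none => exact le_refl _
    | some j =>
      simp only [R3]
      rw [lukImp_one' (vA3_mem C Option.none).2, lukImp_zero' (vA3_mem C (Option.some j)).1]
      exact (vA3_mem C Option.none).2

lemma val_all_some (C : ALCConcept) (i : ℕ) :
    lukVal A3 R3 (ALCConcept.all C) (Option.some i) = lukVal A3 R3 C (Option.some (i+1)) := by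
  show (⨅ y, lukImp (R3 (Option.some i) y) (lukVal A3 R3 C y)) = _
  rw [iInf_eq_of_min (Option.some (i+1))]
  · simp [R3, lukImp_one' (vA3_mem C (Option.some (i+1))).2]
  · intro y
    have h1 : lukImp (R3 (Option.some i) (Option.some (i+1))) (lukVal A3 R3 C (Option.some (i+1)))
        = lukVal A3 R3 C (Option.some (i+1)) := by
      simp [R3, lukImp_one' (vA3_mem C (Option.some (i+1))).2]
    rw [h1]
    cases y with
    | none =>
      simp only [R3]
      rw [lukImp_zero' (vA3_mem C Option.none).1]
      exact (vA3_mem C _).2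
    | some j =>
      by_cases hj : j = i + 1
      · subst hj; rw [h1]
      · simp only [R3, if_neg hj]
        rw [lukImp_zero' (vA3_mem C (Option.some j)).1]
        exact (vA3_mem C _).2

lemma val_ex_none (C : ALCConcept) :
    lukVal A3 R3 (ALCConcept.ex C) Option.none = lukVal A3 R3 C Option.none := by
  show (⨆ y, lukT (R3 Option.none y) (lukVal A3 R3 C y)) = _
  rw [iSup_eq_of_max Option.none]
  · simp [R3, lukT_one' (vA3_mem C Option.none).1]
  · intro y
    cases y with
    | none => exact le_refl _
    | some j =>
      simp only [R3]
      rw [lukT_one' (vA3_mem C Option.none).1, lukT_zero' (vA3_mem C (Option.some j)).2]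
      exact (vA3_mem C Option.none).1

lemma val_ex_some (C : ALCConcept) (i : ℕ) :
    lukVal A3 R3 (ALCConcept.ex C) (Option.some i) = lukVal A3 R3 C (Option.some (i+1)) := by
  show (⨆ y, lukT (R3 (Option.some i) y) (lukVal A3 R3 C y)) = _
  rw [iSup_eq_of_max (Option.some (i+1))]
  · simp [R3, lukT_one' (vA3_mem C (Option.some (i+1))).1]
  · intro y
    have h1 : lukT (R3 (Option.some i) (Option.some (i+1))) (lukVal A3 R3 C (Option.some (i+1)))
        = lukVal A3 R3 C (Option.some (i+1)) := by
      simp [R3, lukT_one' (vA3_mem C (Option.some (i+1))).1]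
    rw [h1]
    cases y with
    | none =>
      simp only [R3]
      rw [lukT_zero' (vA3_mem C Option.none).2]
      exact (vA3_mem C _).1
    | some j =>
      by_cases hj : j = i + 1
      · subst hj; rw [h1]
      · simp only [R3, if_neg hj]
        rw [lukT_zero' (vA3_mem C (Option.some j)).2]
        exact (vA3_mem C _).1

lemma tendsto_lukT {f g : ℕ → ℝ} {a b : ℝ} (hf : Tendsto f atTop (𝓝 a))
    (hg : Tendsto g atTop (𝓝 b)) :
    Tendsto (fun i => lukT (f i) (g i)) atTop (𝓝 (lukT a b)) :=
  ((hf.add hg).sub_const 1).max tendsto_const_nhds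

lemma tendsto_lukS {f g : ℕ → ℝ} {a b : ℝ} (hf : Tendsto f atTop (𝓝 a))
    (hg : Tendsto g atTop (𝓝 b)) :
    Tendsto (fun i => lukS (f i) (g i)) atTop (𝓝 (lukS a b)) :=
  (hf.add hg).min tendsto_const_nhds

lemma key (C : ALCConcept) :
    (lukVal A3 R3 C Option.none = 0 ∧
      Tendsto (fun i : ℕ => lukVal A3 R3 C (Option.some i)) atTop (𝓝 0)) ∨
    (lukVal A3 R3 C Option.none = 1 ∧
      Tendsto (fun i : ℕ => lukVal A3 R3 C (Option.some i)) atTop (𝓝 1)) := by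
  induction C with
  | atom =>
    right
    refine ⟨rfl, ?_⟩
    have h : (fun i : ℕ => lukVal A3 R3 ALCConcept.atom (Option.some i))
        = fun i : ℕ => 1 - (1/2 : ℝ) ^ (i + 1) := by
      funext i
      show ((2:ℝ)^(i+1) - 1) / (2:ℝ)^(i+1) = _
      have h2 : ((2:ℝ))^(i+1) ≠ 0 := by positivity
      rw [div_eq_iff h2, one_div, inv_pow, sub_mul, one_mul, inv_mul_cancel₀ h2]
    rw [h]
    have h0 : Tendsto (fun i : ℕ => ((1:ℝ)/2) ^ (i+1)) atTop (𝓝 0) :=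
      (tendsto_pow_atTop_nhds_zero_of_lt_one (by norm_num) (by norm_num)).comp
        (tendsto_add_atTop_nat 1)
    have := (tendsto_const_nhds : Filter.Tendsto (fun _ : ℕ => (1:ℝ)) atTop (𝓝 1)).sub h0
    simpa using this
  | top => right; exact ⟨rfl, by simpa [lukVal] using tendsto_const_nhds⟩
  | bot => left; exact ⟨rfl, by simpa [lukVal] using tendsto_const_nhds⟩
  | conj C D ihC ihD =>
    have hT : ∀ {a b : ℝ}, Tendsto (fun i : ℕ => lukVal A3 R3 C (Option.some i)) atTop (𝓝 a) →
        Tendsto (fun i : ℕ => lukVal A3 R3 D (Option.some i)) atTop (𝓝 b) →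
        Tendsto (fun i : ℕ => lukVal A3 R3 (ALCConcept.conj C D) (Option.some i)) atTop (𝓝 (lukT a b)) :=
      fun hf hg => tendsto_lukT hf hg
    rcases ihC with ⟨hC0, hCt⟩ | ⟨hC0, hCt⟩ <;> rcases ihD with ⟨hD0, hDt⟩ | ⟨hD0, hDt⟩
    · left; refine ⟨?_, by simpa [lukT] using hT hCt hDt⟩
      show lukT _ _ = 0; rw [hC0, hD0]; simp [lukT]
    · left; refine ⟨?_, by simpa [lukT] using hT hCt hDt⟩
      show lukT _ _ = 0; rw [hC0, hD0]; simp [lukT]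
    · left; refine ⟨?_, by simpa [lukT] using hT hCt hDt⟩
      show lukT _ _ = 0; rw [hC0, hD0]; simp [lukT]
    · right; refine ⟨?_, by simpa [lukT] using hT hCt hDt⟩
      show lukT _ _ = 1; rw [hC0, hD0]; simp [lukT]
  | disj C D ihC ihD =>
    have hT : ∀ {a b : ℝ}, Tendsto (fun i : ℕ => lukVal A3 R3 C (Option.some i)) atTop (𝓝 a) →
        Tendsto (fun i : ℕ => lukVal A3 R3 D (Option.some i)) atTop (𝓝 b) →
        Tendsto (fun i : ℕ => lukVal A3 R3 (ALCConcept.disj C D) (Option.some i)) atTop (𝓝 (lukS a b)) :=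
      fun hf hg => tendsto_lukS hf hg
    rcases ihC with ⟨hC0, hCt⟩ | ⟨hC0, hCt⟩ <;> rcases ihD with ⟨hD0, hDt⟩ | ⟨hD0, hDt⟩
    · left; refine ⟨?_, by simpa [lukS] using hT hCt hDt⟩
      show lukS _ _ = 0; rw [hC0, hD0]; simp [lukS]
    · right; refine ⟨?_, by simpa [lukS] using hT hCt hDt⟩
      show lukS _ _ = 1; rw [hC0, hD0]; simp [lukS]
    · right; refine ⟨?_, by simpa [lukS] using hT hCt hDt⟩
      show lukS _ _ = 1; rw [hC0, hD0]; simp [lukS]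
    · right; refine ⟨?_, by simpa [lukS] using hT hCt hDt⟩
      show lukS _ _ = 1; rw [hC0, hD0]; simp [lukS]
  | neg C ihC =>
    rcases ihC with ⟨hC0, hCt⟩ | ⟨hC0, hCt⟩
    · right
      refine ⟨?_, ?_⟩
      · show 1 - _ = 1; rw [hC0]; ring
      · have := (tendsto_const_nhds : Filter.Tendsto (fun _ : ℕ => (1:ℝ)) atTop (𝓝 1)).sub hCt
        simpa [lukVal] using this
    · left
      refine ⟨?_, ?_⟩
      · show 1 - _ = 0; rw [hC0]; ring
      · have := (tendsto_const_nhds : Filter.Tendsto (fun _ : ℕ => (1:ℝ)) atTop (𝓝 1)).sub hCt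
        simpa [lukVal] using this
  | all C ihC =>
    have hfun : (fun i : ℕ => lukVal A3 R3 (ALCConcept.all C) (Option.some i))
        = (fun i : ℕ => lukVal A3 R3 C (Option.some i)) ∘ (fun i => i + 1) := by
      funext i; exact val_all_some C i
    rcases ihC with ⟨hC0, hCt⟩ | ⟨hC0, hCt⟩
    · left
      refine ⟨by rw [val_all_none]; exact hC0, ?_⟩
      rw [hfun]; exact hCt.comp (tendsto_add_atTop_nat 1)
    · right
      refine ⟨by rw [val_all_none]; exact hC0, ?_⟩
      rw [hfun]; exact hCt.comp (tendsto_add_atTop_nat 1)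
  | ex C ihC =>
    have hfun : (fun i : ℕ => lukVal A3 R3 (ALCConcept.ex C) (Option.some i))
        = (fun i : ℕ => lukVal A3 R3 C (Option.some i)) ∘ (fun i => i + 1) := by
      funext i; exact val_ex_some C i
    rcases ihC with ⟨hC0, hCt⟩ | ⟨hC0, hCt⟩
    · left
      refine ⟨by rw [val_ex_none]; exact hC0, ?_⟩
      rw [hfun]; exact hCt.comp (tendsto_add_atTop_nat 1)
    · right
      refine ⟨by rw [val_ex_none]; exact hC0, ?_⟩
      rw [hfun]; exact hCt.comp (tendsto_add_atTop_nat 1)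

theorem stmt4 (C : ALCConcept) (eps : ℝ) (heps : 0 < eps) :
    Xor' (Cond1 C eps) (Cond2 C eps) := by
  rcases key C with ⟨h0, hT⟩ | ⟨h0, hT⟩
  · left
    constructor
    · refine ⟨h0, ?_⟩
      obtain ⟨n, hn⟩ := Filter.eventually_atTop.mp (hT.eventually_lt_const heps)
      have hne : ((fun i : ℕ => lukVal A3 R3 C (Option.some i)) '' Set.Ici n).Nonempty :=
        ⟨_, ⟨n, le_refl n, rfl⟩⟩
      have hbdd : BddBelow ((fun i : ℕ => lukVal A3 R3 C (Option.some i)) '' Set.Ici n) :=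
        ⟨0, by rintro _ ⟨i, _, rfl⟩; exact (vA3_mem C _).1⟩
      refine ⟨n, ?_, ?_⟩
      · refine le_antisymm ?_ (le_csInf hne (by rintro _ ⟨i, _, rfl⟩; exact (vA3_mem C _).1))
        refine ge_of_tendsto hT ?_
        filter_upwards [Filter.eventually_ge_atTop n] with i hi
        exact csInf_le hbdd ⟨i, hi, rfl⟩
      · refine csSup_le hne ?_
        rintro _ ⟨i, hi, rfl⟩
        exact (hn i hi).le
    · rintro ⟨h1, -⟩
      rw [h0] at h1; norm_num at h1
  · right
    constructor
    · refine ⟨h0, ?_⟩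
      obtain ⟨n, hn⟩ := Filter.eventually_atTop.mp
        (hT.eventually_const_lt (show 1 - eps < 1 by linarith))
      have hne : ((fun i : ℕ => lukVal A3 R3 C (Option.some i)) '' Set.Ici n).Nonempty :=
        ⟨_, ⟨n, le_refl n, rfl⟩⟩
      have hbdd : BddAbove ((fun i : ℕ => lukVal A3 R3 C (Option.some i)) '' Set.Ici n) :=
        ⟨1, by rintro _ ⟨i, _, rfl⟩; exact (vA3_mem C _).2⟩
      refine ⟨n, ?_, ?_⟩
      · refine le_antisymm (csSup_le hne (by rintro _ ⟨i, _, rfl⟩; exact (vA3_mem C _).2)) ?_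
        refine le_of_tendsto hT ?_
        filter_upwards [Filter.eventually_ge_atTop n] with i hi
        exact le_csSup hbdd ⟨i, hi, rfl⟩
      · refine le_csInf hne ?_
        rintro _ ⟨i, hi, rfl⟩
        exact (hn i hi).le
    · rintro ⟨h1, -⟩
      rw [h0] at h1; norm_num at h1
end

section
/- For every rational α ∈ [0,1] there exists a one-variable Łukasiewicz term t such that the induced function f_t : [0,1] → [0,1] satisfies f_t(x) ≤ 1 − α for all x ∈ [0,1] and f_t(α) = 1 − α. -/
/-- One-variable Łukasiewicz terms. -/
inductive LTerm : Type where
  | v : LTerm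
  | conj : LTerm → LTerm → LTerm
  | disj : LTerm → LTerm → LTerm
  | neg : LTerm → LTerm

/-- The function `f_t : [0,1] → [0,1]` induced by a one-variable Łukasiewicz term. -/
def LTerm.eval : LTerm → ℝ → ℝ
  | LTerm.v, x => x
  | LTerm.conj s t, x => max (LTerm.eval s x + LTerm.eval t x - 1) 0
  | LTerm.disj s t, x => min (LTerm.eval s x + LTerm.eval t x) 1
  | LTerm.neg t, x => 1 - LTerm.eval t x

lemma mono_disj_v {g : LTerm} (hg : Monotone g.eval) :
    Monotone (LTerm.disj g LTerm.v).eval := by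
  intro x y hxy
  simp only [LTerm.eval]
  exact min_le_min (add_le_add (hg hxy) hxy) le_rfl

lemma mono_conj_v {g : LTerm} (hg : Monotone g.eval) :
    Monotone (LTerm.conj g LTerm.v).eval := by
  intro x y hxy
  simp only [LTerm.eval]
  exact max_le_max (by linarith [hg hxy]) le_rfl

lemma key_s12 : ∀ (k s t : ℕ) (a : ℝ) (g : LTerm), s + t = k → 0 ≤ a → a ≤ 1 →
    Monotone g.eval → 0 ≤ g.eval a → g.eval a ≤ 1 →
    0 ≤ g.eval a + s*a + t*(a-1) → g.eval a + s*a + t*(a-1) ≤ 1 →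
    ∃ g' : LTerm, Monotone g'.eval ∧ g'.eval a = g.eval a + s*a + t*(a-1) := by
  intro k
  induction k with
  | zero =>
    intro s t a g hst ha0 ha1 hg hg0 hg1 hF0 hF1
    obtain ⟨hs, ht⟩ := Nat.add_eq_zero.mp hst
    subst hs; subst ht
    exact ⟨g, hg, by push_cast; ring⟩
  | succ k ih =>
    intro s t a g hst ha0 ha1 hg hg0 hg1 hF0 hF1
    have hta : ∀ m : ℕ, (m:ℝ) * (a-1) ≤ 0 :=
      fun m => mul_nonpos_of_nonneg_of_nonpos (Nat.cast_nonneg m) (by linarith)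
    have hsa : ∀ m : ℕ, 0 ≤ (m:ℝ) * a :=
      fun m => mul_nonneg (Nat.cast_nonneg m) ha0
    match s, t with
    | 0, 0 => exact absurd hst (by omega)
    | 0, t+1 =>
      -- forced ⊗ step
      have h0' : 0 ≤ g.eval a + a - 1 := by
        have := hta t
        push_cast at hF0
        linarith
      have hval : (LTerm.conj g LTerm.v).eval a = g.eval a + a - 1 := by
        simp only [LTerm.eval]
        exact max_eq_left h0'
      obtain ⟨g', hm, hv⟩ := ih 0 t a (LTerm.conj g LTerm.v)
        (by omega) ha0 ha1 (mono_conj_v hg)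
        (by rw [hval]; exact h0')
        (by rw [hval]; linarith)
        (by rw [hval]; push_cast at hF0 ⊢; linarith)
        (by rw [hval]; push_cast at hF1 ⊢; linarith)
      refine ⟨g', hm, ?_⟩
      rw [hv, hval]; push_cast; ring
    | s+1, 0 =>
      -- forced ⊕ step
      have h1' : g.eval a + a ≤ 1 := by
        have := hsa s
        push_cast at hF1
        linarith
      have hval : (LTerm.disj g LTerm.v).eval a = g.eval a + a :=
        min_eq_left h1'
      obtain ⟨g', hm, hv⟩ := ih s 0 a (LTerm.disj g LTerm.v)
        (by omega) ha0 ha1 (mono_disj_v hg)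
        (by rw [hval]; linarith)
        (by rw [hval]; exact h1')
        (by rw [hval]; push_cast at hF0 ⊢; linarith)
        (by rw [hval]; push_cast at hF1 ⊢; linarith)
      refine ⟨g', hm, ?_⟩
      rw [hv, hval]; push_cast; ring
    | s+1, t+1 =>
      by_cases hc : g.eval a + a ≤ 1
      · have hval : (LTerm.disj g LTerm.v).eval a = g.eval a + a :=
          min_eq_left hc
        obtain ⟨g', hm, hv⟩ := ih s (t+1) a (LTerm.disj g LTerm.v)
          (by omega) ha0 ha1 (mono_disj_v hg)
          (by rw [hval]; linarith)
          (by rw [hval]; exact hc)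
          (by rw [hval]; push_cast at hF0 ⊢; linarith)
          (by rw [hval]; push_cast at hF1 ⊢; linarith)
        refine ⟨g', hm, ?_⟩
        rw [hv, hval]; push_cast; ring
      · push_neg at hc
        have hval : (LTerm.conj g LTerm.v).eval a = g.eval a + a - 1 := by
          simp only [LTerm.eval]
          exact max_eq_left (by linarith)
        obtain ⟨g', hm, hv⟩ := ih (s+1) t a (LTerm.conj g LTerm.v)
          (by omega) ha0 ha1 (mono_conj_v hg)
          (by rw [hval]; linarith)
          (by rw [hval]; linarith)
          (by rw [hval]; push_cast at hF0 ⊢; linarith)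
          (by rw [hval]; push_cast at hF1 ⊢; linarith)
        refine ⟨g', hm, ?_⟩
        rw [hv, hval]; push_cast; ring

theorem stmt12 (q : ℚ) (h0 : 0 ≤ q) (h1 : q ≤ 1) :
    ∃ t : LTerm,
      (∀ x ∈ Set.Icc (0:ℝ) 1, LTerm.eval t x ≤ 1 - (q : ℝ)) ∧
      LTerm.eval t (q : ℝ) = 1 - (q : ℝ) := by
  rcases eq_or_lt_of_le h0 with h0 | h0
  · -- q = 0
    refine ⟨LTerm.neg LTerm.v, ?_, ?_⟩
    · intro x hx
      simp only [LTerm.eval, ← h0]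
      push_cast
      linarith [hx.1]
    · simp [LTerm.eval, ← h0]
  rcases eq_or_lt_of_le h1 with h1 | h1
  · -- q = 1
    refine ⟨LTerm.conj LTerm.v (LTerm.neg LTerm.v), ?_, ?_⟩
    · intro x hx
      simp [LTerm.eval, h1]
    · simp [LTerm.eval, h1]
  -- 0 < q < 1
  set a : ℝ := (q:ℝ) with ha
  have ha0 : 0 < a := by rw [ha]; exact_mod_cast h0
  have ha1 : a < 1 := by rw [ha]; exact_mod_cast h1
  have hnum : 0 < q.num := Rat.num_pos.mpr h0
  set p : ℕ := q.num.toNat with hp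
  set n : ℕ := q.den with hn
  have hp1 : 1 ≤ p := by omega
  have hna : (n:ℝ) * a = p := by
    have h : (q.den : ℝ) * (q:ℝ) = (q.num : ℝ) := by
      rw [Rat.cast_def]
      field_simp
    rw [ha, hn, hp, h]
    congr 1
    exact_mod_cast (Int.toNat_of_nonneg hnum.le).symm
  have hpn : p + 1 ≤ n := by
    have hnpos : (0:ℝ) < n := by
      have : 0 < q.den := q.pos
      exact_mod_cast this
    have : (p:ℝ) < n := by nlinarith
    have : p < n := by exact_mod_cast this
    omega
  have hF : a + ((n - p - 1 : ℕ):ℝ) * a + ((p - 1 : ℕ):ℝ) * (a-1) = 1 - a := by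
    have e1 : ((n - p - 1 : ℕ):ℝ) = (n:ℝ) - (p:ℝ) - 1 := by
      rw [Nat.cast_sub (by omega : 1 ≤ n - p), Nat.cast_sub (by omega : p ≤ n)]
      norm_num
    have e2 : ((p - 1 : ℕ):ℝ) = (p:ℝ) - 1 := by
      rw [Nat.cast_sub hp1]; norm_num
    rw [e1, e2]
    linear_combination hna
  obtain ⟨g, hm, hv⟩ := key_s12 ((n-p-1) + (p-1)) (n-p-1) (p-1) a LTerm.v rfl ha0.le ha1.le
    (fun x y h => by simpa [LTerm.eval] using h)
    (by simpa [LTerm.eval] using ha0.le)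
    (by simpa [LTerm.eval] using ha1.le)
    (by simp only [LTerm.eval]; rw [hF]; linarith)
    (by simp only [LTerm.eval]; rw [hF]; linarith)
  simp only [LTerm.eval] at hv
  rw [hF] at hv
  refine ⟨LTerm.conj (LTerm.neg LTerm.v) (LTerm.disj LTerm.v g), ?_, ?_⟩
  · intro x hx
    simp only [LTerm.eval]
    rcases le_total x a with hxa | hxa
    · have hgx : g.eval x ≤ 1 - a := hv ▸ hm hxa
      have : min (x + g.eval x) 1 ≤ x + g.eval x := min_le_left _ _
      apply max_le <;> linarith
    · have : min (x + g.eval x) 1 ≤ 1 := min_le_right _ _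
      apply max_le <;> linarith
  · simp only [LTerm.eval, hv]
    rw [show a + (1 - a) = 1 by ring]
    simp
    linarith
end
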